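/- For every integer n ≥ 2 and every real c with 0 < c ≤ 1/2 satisfying log n ≥ 2σ·log(1/c), either f(n) ≥ 1/(4c) or f(n) ≥ k^j, where k = ⌊(σ·log(1/c) − 1)/log(2/ε)⌋ and j = ⌊log n/(4σ·log(1/c))⌋. -/

import Mathlib

open SimpleGraph
open scoped Classical

/-- A cograph is a graph with no induced path on 4 vertices. -/
def IsCograph {V : Type} (G : SimpleGraph V) : Prop :=
  ¬ Nonempty (pathGraph 4 ↪g G)

/-- `phi G` is the maximum number of vertices of an induced subgraph of `G`
that is a cograph. -/
noncomputable def phi {n : ℕ} (G : SimpleGraph (Fin n)) : ℕ :=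
  sSup {k | ∃ s : Finset (Fin n), s.card = k ∧ IsCograph (G.induce (s : Set (Fin n)))}

/-- A class of graphs (one predicate for each number of vertices) is hereditary if it is
closed under isomorphic copies of induced subgraphs. -/
def Hereditary (I : ∀ n : ℕ, SimpleGraph (Fin n) → Prop) : Prop :=
  ∀ (m n : ℕ) (G : SimpleGraph (Fin n)) (H : SimpleGraph (Fin m)),
    I n G → Nonempty (H ↪g G) → I m H

/-- `fI I x` is the minimum of `phi G` over graphs `G` in the class `I` with `⌈x⌉`
vertices. -/
noncomputable def fI (I : ∀ n : ℕ, SimpleGraph (Fin n) → Prop) (x : ℝ) : ℕ :=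
  sInf {m | ∃ G : SimpleGraph (Fin ⌈x⌉₊), I ⌈x⌉₊ G ∧ phi G = m}

/-!
Write `r = c ^ σ` and suppose `4c f(y) ≤ 1`. In a graph on `⌈y⌉` vertices with `φ = f(y)` the
density hypothesis gives a pair `A, B`, which is sparse after passing to the complement if needed
(cographs are closed under complementation). Half of `A` has at most `2c|B|` neighbours in `B`
each; a cograph `C` of size `f(|A|/2)` inside that half has at most `|B|/2` neighbours in `B`
altogether, and a cograph among the other vertices of `B` has no edge to `C`, so the union is a
cograph. Hence `f(ry/2) + f(εy/2) ≤ f(y)`. Repeating this on the `B`-side `k` times gives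
`k f(r²x) ≤ f(x)` as long as `2r ≤ (ε/2)^k`, and repeating that `j` times gives `k^j ≤ f(x)` as
long as `1 ≤ r^(2j) x`; the `k` and `j` of the statement are chosen so that both conditions hold.
-/

open Finset

section Cograph

variable {V W : Type} {G : SimpleGraph V} {H : SimpleGraph W}

lemma IsCograph.of_embedding (e : H ↪g G) (hG : IsCograph G) : IsCograph H :=
  fun ⟨p⟩ => hG ⟨e.comp p⟩

lemma IsCograph.of_subsingleton [Subsingleton V] (G : SimpleGraph V) : IsCograph G :=
  fun ⟨p⟩ => absurd (p.injective (Subsingleton.elim (p 0) (p 1))) (by decide)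

lemma isCograph_induce_iff {s : Set V} :
    IsCograph (G.induce s) ↔ ∀ p : pathGraph 4 ↪g G, ¬ Set.range p ⊆ s := by
  refine ⟨fun hs p hp => hs ⟨(G.induceHomOfLE hp).comp p.isoInduceRange.toEmbedding⟩,
    fun h ⟨q⟩ => h ((Embedding.induce s).comp q) ?_⟩
  rintro _ ⟨i, rfl⟩
  exact (q i).2

lemma IsCograph.induce_mono {s t : Set V} (hst : s ⊆ t) (ht : IsCograph (G.induce t)) :
    IsCograph (G.induce s) :=
  isCograph_induce_iff.2 fun p hp => isCograph_induce_iff.1 ht p (hp.trans hst)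

lemma IsCograph.induce_image (e : H ↪g G) {s : Set W} (hs : IsCograph (H.induce s)) :
    IsCograph (G.induce (e '' s)) := by
  have hrange : Set.range (e.comp (Embedding.induce s)) = e '' s := by
    ext; simp
  exact hs.of_embedding (hrange ▸ (e.comp (Embedding.induce s)).isoInduceRange).symm.toEmbedding

lemma IsCograph.induce_union_of_forall_not_adj {s t : Set V} (hs : IsCograph (G.induce s))
    (ht : IsCograph (G.induce t)) (hst : ∀ a ∈ s, ∀ b ∈ t, ¬ G.Adj a b) :
    IsCograph (G.induce (s ∪ t)) := by
  rw [isCograph_induce_iff] at hs ht ⊢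
  intro p hp
  -- adjacent vertices of the path lie on the same side, so the whole path lies in `s` or in `t`
  have hmem : ∀ i, p i ∉ s → p i ∈ t := fun i => (hp ⟨i, rfl⟩).resolve_left
  have hside : ∀ i j : Fin 4, (pathGraph 4).Adj i j → (p i ∈ s ↔ p j ∈ s) := by
    intro i j hij
    have hadj := p.map_adj_iff.2 hij
    constructor <;> intro h <;> by_contra h'
    · exact hst _ h _ (hmem j h') hadj
    · exact hst _ h _ (hmem i h') hadj.symm
  have h01 := hside 0 1 (by simp [pathGraph_adj])
  have h12 := hside 1 2 (by simp [pathGraph_adj])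
  have h23 := hside 2 3 (by simp [pathGraph_adj])
  by_cases h0 : p 0 ∈ s
  · refine hs p ?_
    rintro _ ⟨i, rfl⟩
    fin_cases i <;> simp_all
  · refine ht p ?_
    rintro _ ⟨i, rfl⟩
    fin_cases i <;> simp_all

/-- `2 - 0 - 3 - 1` is the path formed by the non-edges of `0 - 1 - 2 - 3`. -/
def pathGraphFourIsoCompl : pathGraph 4 ≃g (pathGraph 4)ᶜ where
  toFun := ![2, 0, 3, 1]
  invFun := ![1, 3, 0, 2]
  left_inv := by decide
  right_inv := by decide
  map_rel_iff' := by
    intro a b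
    fin_cases a <;> fin_cases b <;> simp [pathGraph_adj]

lemma isCograph_compl_iff : IsCograph Gᶜ ↔ IsCograph G := by
  have key : ∀ G : SimpleGraph V, pathGraph 4 ⊴ G → pathGraph 4 ⊴ Gᶜ :=
    fun G h => pathGraphFourIsoCompl.isIndContained.trans h.compl
  exact not_congr ⟨fun h => compl_compl G ▸ key _ h, key G⟩

lemma isCograph_compl_induce_iff {s : Set V} :
    IsCograph (Gᶜ.induce s) ↔ IsCograph (G.induce s) := by
  have : Gᶜ.induce s = (G.induce s)ᶜ := by
    ext a b
    simp [Subtype.ext_iff]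
  rw [this, isCograph_compl_iff]

end Cograph

section Phi

variable {n : ℕ}

lemma bddAbove_card_isCograph (G : SimpleGraph (Fin n)) :
    BddAbove {k | ∃ s : Finset (Fin n), #s = k ∧ IsCograph (G.induce (s : Set (Fin n)))} :=
  ⟨n, by rintro _ ⟨s, rfl, -⟩; simpa using card_le_univ s⟩

lemma card_le_phi {G : SimpleGraph (Fin n)} {s : Finset (Fin n)}
    (hs : IsCograph (G.induce (s : Set (Fin n)))) : #s ≤ phi G :=
  le_csSup (bddAbove_card_isCograph G) ⟨s, rfl, hs⟩

lemma exists_card_eq_phi (G : SimpleGraph (Fin n)) :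
    ∃ s : Finset (Fin n), #s = phi G ∧ IsCograph (G.induce (s : Set (Fin n))) :=
  Nat.sSup_mem (s := {k | ∃ s : Finset (Fin n), #s = k ∧ IsCograph (G.induce (s : Set (Fin n)))})
    ⟨0, ∅, card_empty, by simpa using IsCograph.of_subsingleton _⟩
    (bddAbove_card_isCograph G)

end Phi

section FI

variable {I : ∀ n : ℕ, SimpleGraph (Fin n) → Prop}

lemma fI_natCast_ceil (x : ℝ) : fI I ⌈x⌉₊ = fI I x := by
  unfold fI
  rw [Nat.ceil_natCast]

lemma fI_natCast_le_phi {m : ℕ} {G : SimpleGraph (Fin m)} (hG : I m G) : fI I m ≤ phi G := by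
  unfold fI
  rw [Nat.ceil_natCast]
  exact Nat.sInf_le ⟨G, hG, rfl⟩

lemma exists_phi_eq_fI (hall : ∀ m : ℕ, ∃ G : SimpleGraph (Fin m), I m G) (x : ℝ) :
    ∃ G : SimpleGraph (Fin ⌈x⌉₊), I ⌈x⌉₊ G ∧ phi G = fI I x := by
  obtain ⟨G, hG⟩ := hall ⌈x⌉₊
  exact Nat.sInf_mem (s := {m | ∃ G : SimpleGraph (Fin ⌈x⌉₊), I ⌈x⌉₊ G ∧ phi G = m})
    ⟨phi G, G, hG, rfl⟩

lemma exists_isCograph_subset_fI_le_card (hI : Hereditary I) {n : ℕ} {G : SimpleGraph (Fin n)}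
    (hG : I n G) (B : Finset (Fin n)) :
    ∃ C ⊆ B, fI I #B ≤ #C ∧ IsCograph (G.induce (C : Set (Fin n))) := by
  let f : Fin #B ↪ Fin n := (B.orderEmbOfFin rfl).toEmbedding
  let e : G.comap f ↪g G := Embedding.comap f G
  obtain ⟨s, hs, hcog⟩ := exists_card_eq_phi (G.comap f)
  refine ⟨s.map f, ?_, ?_, ?_⟩
  · intro v hv
    obtain ⟨i, -, rfl⟩ := mem_map.1 hv
    exact B.orderEmbOfFin_mem rfl i
  · rw [card_map, hs]
    exact fI_natCast_le_phi (hI _ _ G _ hG ⟨e⟩)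
  · rw [coe_map]
    exact hcog.induce_image e

lemma fI_mono (hI : Hereditary I) (hall : ∀ m : ℕ, ∃ G : SimpleGraph (Fin m), I m G) :
    Monotone (fI I) := by
  intro x y hxy
  obtain ⟨G, hG, hphi⟩ := exists_phi_eq_fI hall y
  obtain ⟨S, -, hS⟩ := exists_subset_card_eq (s := (univ : Finset (Fin ⌈y⌉₊))) (n := ⌈x⌉₊)
    (by simpa using Nat.ceil_mono hxy)
  obtain ⟨C, -, hC, hcog⟩ := exists_isCograph_subset_fI_le_card hI hG S
  calc fI I x = fI I #S := by rw [hS, fI_natCast_ceil]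
    _ ≤ #C := hC
    _ ≤ fI I y := hphi ▸ card_le_phi hcog

lemma one_le_fI (hall : ∀ m : ℕ, ∃ G : SimpleGraph (Fin m), I m G) {x : ℝ} (hx : 0 < x) :
    1 ≤ fI I x := by
  obtain ⟨G, -, hphi⟩ := exists_phi_eq_fI hall x
  have v : Fin ⌈x⌉₊ := ⟨0, Nat.ceil_pos.2 hx⟩
  calc 1 = #{v} := (card_singleton v).symm
    _ ≤ fI I x := hphi ▸ card_le_phi (by simpa using IsCograph.of_subsingleton _)

end FI

section Density

variable {V : Type} {G : SimpleGraph V} [DecidableRel G.Adj]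

lemma sum_card_filter_adj_eq_card_interedges (A B : Finset V) :
    ∑ a ∈ A, #{b ∈ B | G.Adj a b} = #(G.interedges A B) := by
  simp only [interedges_def, card_filter, sum_product]

lemma card_le_two_mul_card_filter_of_edgeDensity_le {A B : Finset V} (hB : B.Nonempty) {c : ℝ}
    (hc : 0 < c) (hd : (G.edgeDensity A B : ℝ) ≤ c) :
    (#A : ℝ) ≤ 2 * #{a ∈ A | (#{b ∈ B | G.Adj a b} : ℝ) ≤ 2 * c * #B} := by
  rcases A.eq_empty_or_nonempty with rfl | hA
  · simp
  set bad := {a ∈ A | ¬ (#{b ∈ B | G.Adj a b} : ℝ) ≤ 2 * c * #B}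
  have hsplit := card_filter_add_card_filter_not (s := A)
    (fun a => (#{b ∈ B | G.Adj a b} : ℝ) ≤ 2 * c * #B)
  have hedges : (#(G.interedges A B) : ℝ) ≤ c * (#A * #B) := by
    rw [edgeDensity_def] at hd
    push_cast at hd
    rwa [div_le_iff₀ (by positivity)] at hd
  have hbad : #bad * (2 * c * #B) ≤ c * (#A * #B) :=
    calc #bad * (2 * c * #B) ≤ ∑ a ∈ bad, (#{b ∈ B | G.Adj a b} : ℝ) := by
          rw [← nsmul_eq_mul]
          exact card_nsmul_le_sum _ _ _ fun a ha => (not_le.1 (mem_filter.1 ha).2).le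
      _ ≤ ∑ a ∈ A, (#{b ∈ B | G.Adj a b} : ℝ) :=
          sum_le_sum_of_subset_of_nonneg (filter_subset _ _) fun _ _ _ => by positivity
      _ = #(G.interedges A B) := by exact_mod_cast sum_card_filter_adj_eq_card_interedges A B
      _ ≤ c * (#A * #B) := hedges
  have hBpos : (0 : ℝ) < #B := by exact_mod_cast hB.card_pos
  have : (#bad : ℝ) * 2 ≤ #A :=
    le_of_mul_le_mul_right (by linarith) (mul_pos hc hBpos)
  have hsplit' : (#{a ∈ A | (#{b ∈ B | G.Adj a b} : ℝ) ≤ 2 * c * #B} : ℝ) + #bad = #A := by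
    exact_mod_cast hsplit
  linarith

lemma card_filter_exists_adj_le (C B : Finset V) :
    #{b ∈ B | ∃ a ∈ C, G.Adj a b} ≤ ∑ a ∈ C, #{b ∈ B | G.Adj a b} := by
  refine (card_le_card fun b hb => ?_).trans card_biUnion_le
  obtain ⟨hbB, a, ha, hab⟩ := mem_filter.1 hb
  exact mem_biUnion.2 ⟨a, ha, mem_filter.2 ⟨hbB, hab⟩⟩

lemma card_le_two_mul_card_filter_not_exists_adj {B C : Finset V} {c : ℝ}
    (hdeg : ∀ a ∈ C, (#{b ∈ B | G.Adj a b} : ℝ) ≤ 2 * c * #B) (hC : 4 * c * #C ≤ 1) :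
    (#B : ℝ) ≤ 2 * #{b ∈ B | ¬ ∃ a ∈ C, G.Adj a b} := by
  have hsplit := card_filter_add_card_filter_not (s := B) (fun b => ∃ a ∈ C, G.Adj a b)
  have hbad : (#{b ∈ B | ∃ a ∈ C, G.Adj a b} : ℝ) ≤ #C * (2 * c * #B) :=
    calc (#{b ∈ B | ∃ a ∈ C, G.Adj a b} : ℝ) ≤ ∑ a ∈ C, (#{b ∈ B | G.Adj a b} : ℝ) := by
          exact_mod_cast card_filter_exists_adj_le C B
      _ ≤ #C * (2 * c * #B) := by
          rw [← nsmul_eq_mul]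
          exact sum_le_card_nsmul _ _ _ hdeg
  have hsplit' : (#{b ∈ B | ∃ a ∈ C, G.Adj a b} : ℝ) + #{b ∈ B | ¬ ∃ a ∈ C, G.Adj a b} = #B := by
    exact_mod_cast hsplit
  nlinarith [(Nat.cast_nonneg #B : (0 : ℝ) ≤ #B)]

lemma exists_isCograph_add_le_card_of_edgeDensity_le (g : ℝ → ℕ) (hg : Monotone g)
    (hcog : ∀ S : Finset V, ∃ C ⊆ S, g #S ≤ #C ∧ IsCograph (G.induce (C : Set V)))
    {A B : Finset V} (hAB : Disjoint A B) (hB : B.Nonempty) {c : ℝ} (hc : 0 < c)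
    (hd : (G.edgeDensity A B : ℝ) ≤ c) (hsmall : 4 * c * g (#A / 2) ≤ 1) :
    ∃ S : Finset V, g (#A / 2) + g (#B / 2) ≤ #S ∧ IsCograph (G.induce (S : Set V)) := by
  set A' := {a ∈ A | (#{b ∈ B | G.Adj a b} : ℝ) ≤ 2 * c * #B}
  have hA' := card_le_two_mul_card_filter_of_edgeDensity_le hB hc hd
  obtain ⟨C₀, hC₀A', hC₀, hC₀cog⟩ := hcog A'
  obtain ⟨C, hCC₀, hC⟩ := exists_subset_card_eq ((hg (by linarith)).trans hC₀ : g (#A / 2) ≤ #C₀)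
  have hCA' : C ⊆ A' := hCC₀.trans hC₀A'
  set B' := {b ∈ B | ¬ ∃ a ∈ C, G.Adj a b}
  have hB' : (#B : ℝ) ≤ 2 * #B' := card_le_two_mul_card_filter_not_exists_adj
    (fun a ha => (mem_filter.1 (hCA' ha)).2) (by rwa [hC])
  obtain ⟨D, hDB', hD, hDcog⟩ := hcog B'
  have hCD : Disjoint C D :=
    hAB.mono (hCA'.trans (filter_subset _ _)) (hDB'.trans (filter_subset _ _))
  refine ⟨C ∪ D, ?_, ?_⟩
  · rw [card_union_of_disjoint hCD, hC]
    exact Nat.add_le_add_left ((hg (by linarith)).trans hD) _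
  · rw [coe_union]
    exact (hC₀cog.induce_mono (coe_subset.2 hCC₀)).induce_union_of_forall_not_adj hDcog
      fun a ha b hb hab => (mem_filter.1 (hDB' hb)).2 ⟨a, ha, hab⟩

lemma exists_isCograph_add_le_card_of_homogeneous (g : ℝ → ℕ) (hg : Monotone g)
    (hcog : ∀ S : Finset V, ∃ C ⊆ S, g #S ≤ #C ∧ IsCograph (G.induce (C : Set V)))
    {A B : Finset V} (hAB : Disjoint A B) (hA : A.Nonempty) (hB : B.Nonempty) {c : ℝ}
    (hc : 0 < c) (hd : (G.edgeDensity A B : ℝ) ≤ c ∨ 1 - c ≤ (G.edgeDensity A B : ℝ))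
    (hsmall : 4 * c * g (#A / 2) ≤ 1) :
    ∃ S : Finset V, g (#A / 2) + g (#B / 2) ≤ #S ∧ IsCograph (G.induce (S : Set V)) := by
  rcases hd with hd | hd
  · exact exists_isCograph_add_le_card_of_edgeDensity_le g hg hcog hAB hB hc hd hsmall
  have hdc : (Gᶜ.edgeDensity A B : ℝ) ≤ c := by
    have : (G.edgeDensity A B : ℝ) + Gᶜ.edgeDensity A B = 1 := by
      exact_mod_cast G.edgeDensity_add_edgeDensity_compl hA hB hAB
    linarith
  obtain ⟨S, hS, hScog⟩ := exists_isCograph_add_le_card_of_edgeDensity_le (G := Gᶜ) g hg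
    (fun S => by simpa only [isCograph_compl_induce_iff] using hcog S) hAB hB hc hdc hsmall
  exact ⟨S, hS, isCograph_compl_induce_iff.1 hScog⟩

end Density

section Iteration

variable {I : ∀ n : ℕ, SimpleGraph (Fin n) → Prop} (hI : Hereditary I)
  (hall : ∀ m : ℕ, ∃ G : SimpleGraph (Fin m), I m G) {c r ε : ℝ}
  (hpair : ∀ (n : ℕ) (G : SimpleGraph (Fin n)), 2 ≤ n → I n G →
    ∃ A B : Finset (Fin n), Disjoint A B ∧ A.Nonempty ∧ B.Nonempty ∧
      r * n ≤ (#A : ℝ) ∧ ε * n ≤ (#B : ℝ) ∧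
      ((G.edgeDensity A B : ℝ) ≤ c ∨ 1 - c ≤ (G.edgeDensity A B : ℝ)))
  (hc : 0 < c) (hr : 0 ≤ r)

include hI hall hpair hc hr in
lemma fI_add_fI_le (hε : 0 ≤ ε) {y : ℝ} (hy : 2 ≤ y) (hsmall : 4 * c * fI I y ≤ 1) :
    fI I (r * y / 2) + fI I (ε * y / 2) ≤ fI I y := by
  obtain ⟨G, hG, hphi⟩ := exists_phi_eq_fI hall y
  obtain ⟨A, B, hAB, hA, hB, hAr, hBε, hd⟩ :=
    hpair _ G (by simpa using Nat.ceil_mono hy) hG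
  have hym : y ≤ ⌈y⌉₊ := Nat.le_ceil y
  have hmy : (⌈y⌉₊ : ℝ) ≤ 2 * y := by linarith [Nat.ceil_lt_add_one (by linarith : 0 ≤ y)]
  have hAm : (#A : ℝ) ≤ ⌈y⌉₊ := by exact_mod_cast (card_le_univ A).trans_eq (Fintype.card_fin _)
  have hAsmall : 4 * c * fI I (#A / 2) ≤ 1 := by
    have : (fI I (#A / 2) : ℝ) ≤ fI I y := by exact_mod_cast fI_mono hI hall (by linarith)
    nlinarith
  obtain ⟨S, hS, hScog⟩ := exists_isCograph_add_le_card_of_homogeneous (fI I) (fI_mono hI hall)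
    (exists_isCograph_subset_fI_le_card hI hG) hAB hA hB hc hd hAsmall
  calc fI I (r * y / 2) + fI I (ε * y / 2) ≤ fI I (#A / 2) + fI I (#B / 2) := by
        gcongr <;> apply fI_mono hI hall <;> nlinarith
    _ ≤ #S := hS
    _ ≤ fI I y := hphi ▸ card_le_phi hScog

include hI hall hpair hc hr in
lemma mul_fI_add_fI_le (hε0 : 0 ≤ ε) (hε2 : ε ≤ 2) {k : ℕ} (hk : 2 * r ≤ (ε / 2) ^ k) {x : ℝ}
    (hx : 1 ≤ r * x) (hsmall : 4 * c * fI I x ≤ 1) :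
    ∀ i ≤ k, i * fI I (r ^ 2 * x) + fI I ((ε / 2) ^ i * x) ≤ fI I x := by
  have hx0 : 0 ≤ x := by nlinarith
  intro i
  induction i with
  | zero => simp
  | succ i ih =>
    intro hi
    set y := (ε / 2) ^ i * x
    have hyx : y ≤ x := mul_le_of_le_one_left hx0 (pow_le_one₀ (by positivity) (by linarith))
    have hry : 2 * r * x ≤ y := mul_le_mul_of_nonneg_right
      (hk.trans (pow_le_pow_of_le_one (by positivity) (by linarith) (Nat.le_of_succ_le hi))) hx0
    have hsmall_y : 4 * c * fI I y ≤ 1 := by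
      have : (fI I y : ℝ) ≤ fI I x := by exact_mod_cast fI_mono hI hall hyx
      nlinarith
    have hstep := fI_add_fI_le hI hall hpair hc hr hε0 (by linarith) hsmall_y
    have hr2 : fI I (r ^ 2 * x) ≤ fI I (r * y / 2) := fI_mono hI hall (by nlinarith)
    have hεy : (ε / 2) ^ (i + 1) * x = ε * y / 2 := by ring
    calc (i + 1) * fI I (r ^ 2 * x) + fI I ((ε / 2) ^ (i + 1) * x)
        = i * fI I (r ^ 2 * x) + (fI I (r ^ 2 * x) + fI I (ε * y / 2)) := by rw [hεy]; ring
      _ ≤ i * fI I (r ^ 2 * x) + fI I y := by gcongr; exact (Nat.add_le_add_right hr2 _).trans hstep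
      _ ≤ fI I x := ih (Nat.le_of_succ_le hi)

include hI hall hpair hc hr in
lemma pow_le_fI (hr1 : r ≤ 1) (hε0 : 0 ≤ ε) (hε2 : ε ≤ 2) {k : ℕ} (hk : 2 * r ≤ (ε / 2) ^ k) :
    ∀ (j : ℕ) (x : ℝ), 1 ≤ (r ^ 2) ^ j * x → 4 * c * fI I x ≤ 1 → k ^ j ≤ fI I x := by
  intro j
  induction j with
  | zero =>
    intro x hx _
    rw [pow_zero, one_mul] at hx
    exact one_le_fI hall (by linarith)
  | succ j ih =>
    intro x hx hsmall
    have hr2 : r ^ 2 ≤ r := by nlinarith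
    have hpow : (r ^ 2) ^ j ≤ 1 := pow_le_one₀ (by positivity) (by nlinarith)
    have hx0 : 0 ≤ x := by
      by_contra! h
      nlinarith [mul_nonpos_of_nonneg_of_nonpos (pow_nonneg (sq_nonneg r) (j + 1)) h.le]
    have hrx : 1 ≤ r * x := by
      have : (r ^ 2) ^ (j + 1) ≤ r := by rw [pow_succ]; nlinarith [pow_nonneg (sq_nonneg r) j]
      nlinarith
    have hsmall' : 4 * c * fI I (r ^ 2 * x) ≤ 1 := by
      have : (fI I (r ^ 2 * x) : ℝ) ≤ fI I x := by
        exact_mod_cast fI_mono hI hall (mul_le_of_le_one_left hx0 (by nlinarith))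
      nlinarith
    have hx' : 1 ≤ (r ^ 2) ^ j * (r ^ 2 * x) := by rwa [pow_succ, mul_assoc] at hx
    have hkx : k * fI I (r ^ 2 * x) ≤ fI I x := (Nat.le_add_right _ _).trans
      (mul_fI_add_fI_le hI hall hpair hc hr hε0 hε2 hk hrx hsmall k le_rfl)
    calc k ^ (j + 1) = k * k ^ j := pow_succ' k j
      _ ≤ k * fI I (r ^ 2 * x) := Nat.mul_le_mul_left k (ih _ hx' hsmall')
      _ ≤ fI I x := hkx

end Iteration

section Arithmetic

open Real

lemma two_mul_rpow_le_pow_floor {σ c ε : ℝ} (hc : 0 < c) (hε0 : 0 < ε) (hε2 : ε < 2)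
    (hσc : 1 ≤ σ * logb 2 (1 / c)) :
    2 * c ^ σ ≤ (ε / 2) ^ ⌊(σ * logb 2 (1 / c) - 1) / logb 2 (2 / ε)⌋₊ := by
  set k := ⌊(σ * logb 2 (1 / c) - 1) / logb 2 (2 / ε)⌋₊
  have hD : 0 < logb 2 (2 / ε) := logb_pos one_lt_two (by rw [lt_div_iff₀ hε0]; linarith)
  have hk : k * logb 2 (2 / ε) ≤ σ * logb 2 (1 / c) - 1 :=
    (le_div_iff₀ hD).1 (Nat.floor_le (div_nonneg (by linarith) hD.le))
  have hlogc : logb 2 c = -logb 2 (1 / c) := by rw [one_div, logb_inv, neg_neg]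
  have hlogε : logb 2 (ε / 2) = -logb 2 (2 / ε) := by rw [← logb_inv, inv_div]
  rw [← logb_le_logb one_lt_two (by positivity) (by positivity), logb_mul two_ne_zero
    (by positivity), logb_self_eq_one one_lt_two, logb_rpow_eq_mul_logb_of_pos hc, logb_pow,
    hlogc, hlogε]
  linarith

lemma one_le_rpow_sq_pow_floor_mul {σ c : ℝ} {n : ℕ} (hc : 0 < c) (hn : 1 ≤ n)
    (hσc : 0 < σ * logb 2 (1 / c)) :
    1 ≤ ((c ^ σ) ^ 2) ^ ⌊logb 2 n / (4 * σ * logb 2 (1 / c))⌋₊ * n := by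
  set j := ⌊logb 2 n / (4 * σ * logb 2 (1 / c))⌋₊
  have hlogn : 0 ≤ logb 2 n := logb_nonneg one_lt_two (by exact_mod_cast hn)
  have hj : j * (4 * σ * logb 2 (1 / c)) ≤ logb 2 n :=
    (le_div_iff₀ (by linarith)).1 (Nat.floor_le (div_nonneg hlogn (by linarith)))
  have hlogc : logb 2 c = -logb 2 (1 / c) := by rw [one_div, logb_inv, neg_neg]
  have hnpos : (0 : ℝ) < n := by exact_mod_cast hn
  rw [← logb_nonneg_iff one_lt_two (by positivity), logb_mul (by positivity) hnpos.ne',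
    logb_pow, logb_pow, logb_rpow_eq_mul_logb_of_pos hc, hlogc]
  nlinarith [(Nat.cast_nonneg j : (0 : ℝ) ≤ j)]

lemma floor_zpow_floor_eq_natFloor_pow {a b : ℝ} (ha : 0 ≤ a) (hb : 0 ≤ b) :
    ((⌊a⌋ : ℝ) ^ ⌊b⌋ : ℝ) = ((⌊a⌋₊ ^ ⌊b⌋₊ : ℕ) : ℝ) := by
  rw [← Int.natCast_floor_eq_floor ha, ← Int.natCast_floor_eq_floor hb, zpow_natCast]
  push_cast
  rfl

end Arithmetic

theorem f_power_bound_general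
    (I : ∀ n : ℕ, SimpleGraph (Fin n) → Prop) (hI : Hereditary I)
    (hall : ∀ m : ℕ, ∃ G : SimpleGraph (Fin m), I m G)
    (σ ε : ℝ) (hσ : 1 ≤ σ) (hε0 : 0 < ε) (hε1 : ε ≤ 1)
    (hdens : ∀ (n : ℕ) (G : SimpleGraph (Fin n)), 2 ≤ n → I n G →
      ∀ c : ℝ, 0 ≤ c → c ≤ 1 / 2 →
        ∃ A B : Finset (Fin n), Disjoint A B ∧ A.Nonempty ∧ B.Nonempty ∧
          c ^ σ * n ≤ (A.card : ℝ) ∧ ε * n ≤ (B.card : ℝ) ∧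
          ((G.edgeDensity A B : ℝ) ≤ c ∨ 1 - c ≤ (G.edgeDensity A B : ℝ)))
    (n : ℕ) (hn : 2 ≤ n) (c : ℝ) (hc0 : 0 < c) (hc : c ≤ 1 / 2) :
    1 / (4 * c) ≤ (fI I n : ℝ) ∨
      ((⌊(σ * Real.logb 2 (1 / c) - 1) / Real.logb 2 (2 / ε)⌋ : ℝ) ^
          ⌊Real.logb 2 n / (4 * σ * Real.logb 2 (1 / c))⌋ : ℝ) ≤ (fI I n : ℝ) := by
  refine or_iff_not_imp_left.2 fun hbig => ?_
  have hsmall : 4 * c * fI I n ≤ 1 := by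
    have := (lt_div_iff₀' (by positivity)).1 (not_le.1 hbig)
    linarith
  have hL : 1 ≤ Real.logb 2 (1 / c) :=
    calc 1 = Real.logb 2 2 := (Real.logb_self_eq_one one_lt_two).symm
      _ ≤ Real.logb 2 (1 / c) :=
        Real.logb_le_logb_of_le one_lt_two two_pos (by rw [le_div_iff₀ hc0]; linarith)
  have hD : 0 ≤ Real.logb 2 (2 / ε) :=
    Real.logb_nonneg one_lt_two (by rw [le_div_iff₀ hε0]; linarith)
  have hσL : 1 ≤ σ * Real.logb 2 (1 / c) := by nlinarith
  rw [floor_zpow_floor_eq_natFloor_pow (div_nonneg (by linarith) hD)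
    (div_nonneg (Real.logb_nonneg one_lt_two (by exact_mod_cast hn.trans' one_le_two))
      (by positivity))]
  exact_mod_cast pow_le_fI hI hall (fun m G hm hG => hdens m G hm hG c hc0.le hc) hc0
    (by positivity) (Real.rpow_le_one hc0.le (by linarith) (by linarith)) hε0.le (by linarith)
    (two_mul_rpow_le_pow_floor hc0 hε0 (by linarith) hσL) _ _
    (one_le_rpow_sq_pow_floor_mul hc0 (by omega) (by linarith)) hsmall

/-- Step (3): for all `n ≥ 2` and `0 < c ≤ 1/2` with `log n ≥ 2σ log(1/c)`, either
`f(n) ≥ 1/(4c)` or `f(n) ≥ k^j` where `k = ⌊(σ log(1/c) - 1)/log(2/ε)⌋` and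
`j = ⌊log n/(4σ log(1/c))⌋` (logs base 2). -/
theorem f_power_bound
    (I : ∀ n : ℕ, SimpleGraph (Fin n) → Prop) (hI : Hereditary I)
    (hall : ∀ m : ℕ, ∃ G : SimpleGraph (Fin m), I m G)
    (σ ε : ℝ) (hσ : 1 ≤ σ) (hε0 : 0 < ε) (hε1 : ε ≤ 1)
    (hdens : ∀ (n : ℕ) (G : SimpleGraph (Fin n)), 2 ≤ n → I n G →
      ∀ c : ℝ, 0 ≤ c → c ≤ 1 / 2 →
        ∃ A B : Finset (Fin n), Disjoint A B ∧ A.Nonempty ∧ B.Nonempty ∧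
          c ^ σ * n ≤ (A.card : ℝ) ∧ ε * n ≤ (B.card : ℝ) ∧
          ((G.edgeDensity A B : ℝ) ≤ c ∨ 1 - c ≤ (G.edgeDensity A B : ℝ)))
    (n : ℕ) (hn : 2 ≤ n) (c : ℝ) (hc0 : 0 < c) (hc : c ≤ 1 / 2)
    (hlog : 2 * σ * Real.logb 2 (1 / c) ≤ Real.logb 2 n) :
    1 / (4 * c) ≤ (fI I n : ℝ) ∨
      ((⌊(σ * Real.logb 2 (1 / c) - 1) / Real.logb 2 (2 / ε)⌋ : ℝ) ^
          ⌊Real.logb 2 n / (4 * σ * Real.logb 2 (1 / c))⌋ : ℝ) ≤ (fI I n : ℝ) :=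
  f_power_bound_general I hI hall σ ε hσ hε0 hε1 hdens n hn c hc0 hc
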